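/- Let K be a positive integer, let T > 0, set ω₀ = 2π/T, and let N ≥ 2K + 2 be an integer. Let 0 ≤ t₁ < t₂ < ⋯ < t_N < T be real numbers. Then the matrix B ∈ ℂ^{(N−1)×(2K)} defined by B[n, k] = e^{i k ω₀ t_{n+1}} − e^{i k ω₀ t_n} (rows indexed by n = 1, …, N−1, columns by k ∈ {−K, …, −1, 1, …, K}) has full column rank; that is, the only vector x ∈ ℂ^{2K} with B x = 0 is x = 0. -/

import Mathlib

/-!
Put `u n = exp (2πi t n / T)`: the `u n` are pairwise distinct points of the unit circle. Row `n`
of `B x = 0` says that `G n = ∑ₖ xₖ (u n)ᵏ` takes the same value at consecutive nodes, so `G` is a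
constant `c`. Then `zᴷ (∑ₖ xₖ zᵏ - c)` is a polynomial of degree at most `2K` vanishing at the
`N > 2K` points `u n`, hence zero; as the frequencies `k` are nonzero, its coefficients include
all the `xₖ`.
-/

open Polynomial Finset Function Matrix

section Sparse

variable {R F ι κ : Type*} [Fintype ι] [Fintype κ]

theorem eq_zero_of_sum_mul_pow_eq_zero [CommRing R] [IsDomain R] {z : ι → R} (hz : Injective z)
    {e : κ → ℕ} (he : Injective e) {d : ℕ} (hed : ∀ j, e j ≤ d) (hd : d < Fintype.card ι)
    {x : κ → R} (hx : ∀ i, ∑ j, x j * z i ^ e j = 0) : x = 0 := by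
  set P : R[X] := ∑ j, C (x j) * X ^ e j
  have hP : P = 0 := by
    refine eq_zero_of_natDegree_lt_card_of_eval_eq_zero P hz (fun i => ?_) ?_
    · simpa [P, eval_finsetSum] using hx i
    · refine (natDegree_sum_le_of_forall_le _ _ fun j _ => ?_).trans_lt hd
      exact (natDegree_C_mul_X_pow_le _ _).trans (hed j)
  funext j
  have hcoeff : P.coeff (e j) = x j := by
    rw [finsetSum_coeff, sum_eq_single j (fun b _ hb => ?_) (by simp), coeff_C_mul_X_pow,
      if_pos rfl]
    rw [coeff_C_mul_X_pow, if_neg (he.ne hb).symm]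
  rw [← hcoeff, hP, coeff_zero, Pi.zero_apply]

theorem eq_zero_of_sum_mul_zpow_eq_zero [Field F] {u : ι → F} (hu : Injective u)
    (hu₀ : ∀ i, u i ≠ 0) {k : κ → ℤ} (hk : Injective k) {K : ℕ} (hkK : ∀ j, |k j| ≤ K)
    (hK : 2 * K < Fintype.card ι) {x : κ → F} (hx : ∀ i, ∑ j, x j * u i ^ k j = 0) : x = 0 := by
  have hshift : ∀ j, ((k j + K).toNat : ℤ) = k j + K := fun j =>
    Int.toNat_of_nonneg (by linarith [neg_abs_le (k j), hkK j])
  refine eq_zero_of_sum_mul_pow_eq_zero hu (e := fun j => (k j + K).toNat) (d := 2 * K)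
    (fun a b hab => hk (by simpa [hshift] using congrArg (fun n : ℕ => (n : ℤ)) hab))
    (fun j => by have := hshift j; have := abs_le.mp (hkK j); omega) hK fun i => ?_
  calc ∑ j, x j * u i ^ (k j + K).toNat
      = u i ^ K * ∑ j, x j * u i ^ k j := by
        rw [mul_sum]
        refine sum_congr rfl fun j _ => ?_
        rw [← zpow_natCast, hshift, zpow_add₀ (hu₀ i), zpow_natCast]
        ring
    _ = 0 := by rw [hx i, mul_zero]

theorem eq_zero_of_sum_mul_zpow_eq_const [Field F] {u : ι → F} (hu : Injective u)
    (hu₀ : ∀ i, u i ≠ 0) {k : κ → ℤ} (hk : Injective k) (hk₀ : ∀ j, k j ≠ 0) {K : ℕ}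
    (hkK : ∀ j, |k j| ≤ K) (hK : 2 * K < Fintype.card ι) {x : κ → F} {c : F}
    (hx : ∀ i, ∑ j, x j * u i ^ k j = c) : x = 0 := by
  -- `c` enters as the coefficient of the frequency `0`.
  have key := eq_zero_of_sum_mul_zpow_eq_zero hu hu₀ (k := fun o : Option κ => o.elim 0 k)
    (x := fun o => o.elim (-c) x) (K := K) ?_ ?_ hK ?_
  · funext j; exact congrFun key (some j)
  · rintro (_ | a) (_ | b) h
    · rfl
    · exact absurd h.symm (hk₀ b)
    · exact absurd h (hk₀ a)
    · exact congrArg some (hk h)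
  · rintro (_ | j) <;> simp [hkK]
  · intro i; simp [Fintype.sum_option, hx i]

end Sparse

theorem dotProduct_eq_dotProduct_zero_of_mulVec_eq_zero {R κ : Type*} [Fintype κ] [CommRing R]
    {M : ℕ} {B : Matrix (Fin M) κ R} {v : Fin (M + 1) → κ → R}
    (hB : ∀ n, B n = v n.succ - v n.castSucc) {x : κ → R} (hx : B *ᵥ x = 0) (n : Fin (M + 1)) : v n ⬝ᵥ x = v 0 ⬝ᵥ x := by
  induction n using Fin.induction with
  | zero => rfl
  | succ n ih =>
    rw [← ih, ← sub_eq_zero, ← sub_dotProduct, ← hB]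
    exact congrFun hx n

open Real Set in
theorem Circle.injOn_exp_two_pi_div_mul {T : ℝ} (hT : 0 < T) :
    InjOn (fun s => Circle.exp (2 * π / T * s)) (Ico 0 T) := by
  have hmaps : MapsTo (2 * π / T * ·) (Ico 0 T) (Ico 0 (2 * π)) := fun s ⟨hs₀, hsT⟩ =>
    ⟨by positivity, by dsimp only; rw [div_mul_eq_mul_div, div_lt_iff₀ hT]; gcongr⟩
  exact (Circle.exp_injOn_Ico (by simp)).comp (mul_right_injective₀ (by positivity)).injOn hmaps

def columnFreq (K : ℕ) (j : Fin (2 * K)) : ℤ :=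
  if (j : ℕ) < K then (j : ℤ) - K else (j : ℤ) - K + 1

theorem columnFreq_injective (K : ℕ) : Injective (columnFreq K) := by
  intro a b h
  unfold columnFreq at h
  ext
  split_ifs at h <;> omega

theorem columnFreq_ne_zero {K : ℕ} (j : Fin (2 * K)) : columnFreq K j ≠ 0 := by
  unfold columnFreq
  split_ifs <;> omega

theorem abs_columnFreq_le {K : ℕ} (j : Fin (2 * K)) : |columnFreq K j| ≤ K := by
  have := j.isLt
  unfold columnFreq
  rw [abs_le]
  split_ifs <;> omega

open Real in
/-- **Theorem 3 (FRI-TEM).** The IF-TEM measurement matrix `B` (excluding the zero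
frequency) has full column rank when `N ≥ 2K + 2`. The column index `j : Fin (2K)`
corresponds to the frequency `k = j - K` for `j < K` (i.e. `k ∈ {-K,…,-1}`) and to
`k = j - K + 1` for `j ≥ K` (i.e. `k ∈ {1,…,K}`). -/
theorem matrixB_full_column_rank
    (K : ℕ) (T : ℝ)
    (N : ℕ) (hN : 2 * K + 2 ≤ N)
    (t : Fin N → ℝ) (ht_mono : StrictMono t)
    (ht_nonneg : ∀ n, 0 ≤ t n) (ht_lt : ∀ n, t n < T)
    (B : Matrix (Fin (N - 1)) (Fin (2 * K)) ℂ)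
    (hB : ∀ (n : Fin (N - 1)) (j : Fin (2 * K)),
      B n j =
        Complex.exp (Complex.I
            * (((if (j : ℕ) < K then (j : ℤ) - (K : ℤ) else (j : ℤ) - (K : ℤ) + 1) : ℤ) : ℂ)
            * ((2 * Real.pi / T : ℝ) : ℂ)
            * ((t ⟨(n : ℕ) + 1, by have := n.isLt; omega⟩ : ℝ) : ℂ))
        - Complex.exp (Complex.I
            * (((if (j : ℕ) < K then (j : ℤ) - (K : ℤ) else (j : ℤ) - (K : ℤ) + 1) : ℤ) : ℂ)
            * ((2 * Real.pi / T : ℝ) : ℂ)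
            * ((t ⟨(n : ℕ), by have := n.isLt; omega⟩ : ℝ) : ℂ))) :
    ∀ x : Fin (2 * K) → ℂ, B.mulVec x = 0 → x = 0 := by
  intro x hx
  obtain ⟨M, rfl⟩ : ∃ M, N = M + 1 := ⟨N - 1, by omega⟩
  have hT : 0 < T := (ht_nonneg 0).trans_lt (ht_lt 0)
  set u : Fin (M + 1) → ℂ := fun n => Circle.exp (2 * π / T * t n)
  have hu : Injective u := fun a b h => ht_mono.injective <|
    Circle.injOn_exp_two_pi_div_mul hT ⟨ht_nonneg a, ht_lt a⟩ ⟨ht_nonneg b, ht_lt b⟩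
      (Subtype.coe_injective h)
  set v : Fin (M + 1) → Fin (2 * K) → ℂ := fun n j => u n ^ columnFreq K j
  have hB' : ∀ n : Fin M, B n = v n.succ - v n.castSucc := by
    rintro ⟨n, hn⟩
    funext j
    rw [Pi.sub_apply, hB]
    simp only [v, u, Circle.coe_exp, ← Complex.exp_int_mul, columnFreq, Fin.succ_mk,
      Fin.castSucc_mk]
    congr 2 <;> push_cast <;> ring
  refine eq_zero_of_sum_mul_zpow_eq_const hu (fun n => by simp [u]) (columnFreq_injective K)
    columnFreq_ne_zero abs_columnFreq_le (by rw [Fintype.card_fin]; omega) (c := v 0 ⬝ᵥ x)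
    fun n => (dotProduct_comm x (v n)).trans ?_
  exact dotProduct_eq_dotProduct_zero_of_mulVec_eq_zero (M := M) hB' hx n
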